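/- The cutting-plane model value at the new trial point equals minus the predicted decrease η‖w‖² + σ: if θ* ∈ Δ_n minimizes G over Δ_n, w = Σ_{i=1}^n θ*_i g_i, σ = Σ_{i=1}^n θ*_i α_i, and d* = −η·w, then max_{1≤i≤n} (⟨g_i, d*⟩ − α_i) = −(η‖w‖² + σ). -/

import Mathlib

/-!
The minimizer `θ*` of `G` on the simplex has nonnegative one-sided derivative along every edge
direction `e_i - θ*`. Along that direction `G` is an explicit quadratic, and the sign of its
linear coefficient reads `η‖w‖² + σ ≤ η⟪w, g_i⟫ + α_i`: every affine piece at `d* = -η w` is at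
most `-(η‖w‖² + σ)`. The `θ*`-average of the pieces equals this value, so their maximum does too.
-/

open RealInnerProductSpace

/-- The dual master problem objective `G(θ) = (η/2)‖Σ θ_i g_i‖² + Σ θ_i α_i`. -/
noncomputable def dualG {m n : ℕ}
    (g : Fin n → EuclideanSpace ℝ (Fin m)) (α : Fin n → ℝ) (η : ℝ)
    (θ : Fin n → ℝ) : ℝ :=
  (η / 2) * ‖∑ i, θ i • g i‖ ^ 2 + ∑ i, θ i * α i

open Filter Topology Finset

theorem nonneg_of_forall_mul_add_sq_mul_nonneg {a b : ℝ}
    (h : ∀ t : ℝ, 0 < t → t ≤ 1 → 0 ≤ t * a + t ^ 2 * b) : 0 ≤ a := by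
  have hlim : Tendsto (fun t : ℝ => a + t * b) (𝓝[>] 0) (𝓝 a) := by
    have : Tendsto (fun t : ℝ => a + t * b) (𝓝 0) (𝓝 (a + 0 * b)) :=
      Continuous.tendsto (by fun_prop) 0
    simpa using this.mono_left nhdsWithin_le_nhds
  refine ge_of_tendsto hlim ?_
  filter_upwards [Ioc_mem_nhdsGT zero_lt_one] with t ⟨ht0, ht1⟩
  have := h t ht0 ht1
  nlinarith

theorem Finset.sup'_eq_of_forall_le_of_sum_mul_eq {ι : Type*} {s : Finset ι} (hs : s.Nonempty)
    {f w : ι → ℝ} {c : ℝ} (hw₀ : ∀ i ∈ s, 0 ≤ w i) (hw₁ : ∑ i ∈ s, w i = 1)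
    (hle : ∀ i ∈ s, f i ≤ c) (havg : ∑ i ∈ s, w i * f i = c) : s.sup' hs f = c := by
  refine le_antisymm (sup'_le hs f hle) ?_
  calc c = ∑ i ∈ s, w i * f i := havg.symm
    _ ≤ ∑ i ∈ s, w i * s.sup' hs f :=
        sum_le_sum fun i hi => mul_le_mul_of_nonneg_left (le_sup' f hi) (hw₀ i hi)
    _ = s.sup' hs f := by rw [← sum_mul, hw₁, one_mul]

theorem dualG_add_smul {m n : ℕ} (g : Fin n → EuclideanSpace ℝ (Fin m)) (α : Fin n → ℝ)
    (η : ℝ) (θ δ : Fin n → ℝ) (t : ℝ) :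
    dualG g α η (θ + t • δ) = dualG g α η θ
      + t * (η * ⟪∑ i, θ i • g i, ∑ i, δ i • g i⟫ + ∑ i, δ i * α i)
      + t ^ 2 * (η / 2 * ‖∑ i, δ i • g i‖ ^ 2) := by
  have hg : ∑ i, (θ + t • δ) i • g i = ∑ i, θ i • g i + t • ∑ i, δ i • g i := by
    simp only [Pi.add_apply, Pi.smul_apply, smul_eq_mul, add_smul, mul_smul, sum_add_distrib,
      smul_sum]
  have hα : ∑ i, (θ + t • δ) i * α i = ∑ i, θ i * α i + t * ∑ i, δ i * α i := by
    simp only [Pi.add_apply, Pi.smul_apply, smul_eq_mul, add_mul, mul_assoc, sum_add_distrib,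
      mul_sum]
  rw [dualG, dualG, hg, hα, norm_add_sq_real, norm_smul, inner_smul_right, Real.norm_eq_abs,
    mul_pow, sq_abs]
  ring

theorem dualG_first_order {m n : ℕ} (g : Fin n → EuclideanSpace ℝ (Fin m)) (α : Fin n → ℝ)
    (η : ℝ) {θ : Fin n → ℝ} (hθ : θ ∈ stdSimplex ℝ (Fin n))
    (hmin : IsMinOn (dualG g α η) (stdSimplex ℝ (Fin n)) θ) (i : Fin n) :
    η * ‖∑ j, θ j • g j‖ ^ 2 + ∑ j, θ j * α j ≤ η * ⟪∑ j, θ j • g j, g i⟫ + α i := by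
  set w := ∑ j, θ j • g j
  set δ : Fin n → ℝ := Pi.single i 1 - θ
  have hδg : ∑ j, δ j • g j = g i - w := by
    simp [δ, w, sub_smul, sum_sub_distrib, Pi.single_apply]
  have hδα : ∑ j, δ j * α j = α i - ∑ j, θ j * α j := by
    simp [δ, sub_mul, sum_sub_distrib, Pi.single_apply]
  have hslope : 0 ≤ η * ⟪w, g i - w⟫ + (α i - ∑ j, θ j * α j) := by
    refine nonneg_of_forall_mul_add_sq_mul_nonneg (b := η / 2 * ‖g i - w‖ ^ 2) fun t ht0 ht1 => ?_
    have := isMinOn_iff.mp hmin _ <| (convex_stdSimplex ℝ (Fin n)).add_smul_sub_mem hθ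
      (single_mem_stdSimplex ℝ i) ⟨ht0.le, ht1⟩
    rw [dualG_add_smul, hδg, hδα] at this
    linarith
  rw [inner_sub_right, real_inner_self_eq_norm_sq] at hslope
  linarith

theorem stmt_9_general {m n : ℕ} (hn : 0 < n)
    (g : Fin n → EuclideanSpace ℝ (Fin m)) (α : Fin n → ℝ)
    (η : ℝ)
    (θs : Fin n → ℝ) (hθs : ∀ i, 0 ≤ θs i) (hθs1 : ∑ i, θs i = 1)
    (hmin : ∀ θ' : Fin n → ℝ, (∀ i, 0 ≤ θ' i) → (∑ i, θ' i = 1) →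
      dualG g α η θs ≤ dualG g α η θ') :
    Finset.univ.sup' (Finset.univ_nonempty_iff.mpr (Fin.pos_iff_nonempty.mp hn))
        (fun i => ⟪g i, (-η) • ∑ j, θs j • g j⟫ - α i) =
      -(η * ‖∑ j, θs j • g j‖ ^ 2 + ∑ j, θs j * α j) := by
  set w := ∑ j, θs j • g j
  refine sup'_eq_of_forall_le_of_sum_mul_eq _ (fun i _ => hθs i) hθs1 (fun i _ => ?_) ?_
  · have := dualG_first_order g α η ⟨hθs, hθs1⟩
      (isMinOn_iff.mpr fun θ' h => hmin θ' h.1 h.2) i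
    rw [inner_smul_right, real_inner_comm]
    linarith
  · have hw : ∑ j, θs j * ⟪g j, w⟫ = ‖w‖ ^ 2 := by
      simp only [← real_inner_smul_left, ← sum_inner, w, real_inner_self_eq_norm_sq]
    simp only [inner_smul_right, mul_sub, sum_sub_distrib, mul_left_comm _ (-η), ← mul_sum, hw]
    ring

/-- The cutting-plane model value at the new trial point equals minus the predicted
decrease: if `θ*` minimizes `G` over the simplex, `w = Σ θ*_i g_i`, `σ = Σ θ*_i α_i`
and `d* = −η·w`, then `max_i (⟨g_i, d*⟩ − α_i) = −(η‖w‖² + σ)`. -/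
theorem stmt_9 {m n : ℕ} (hn : 0 < n)
    (g : Fin n → EuclideanSpace ℝ (Fin m)) (α : Fin n → ℝ) (hα : ∀ i, 0 ≤ α i)
    (η : ℝ) (hη : 0 < η)
    (θs : Fin n → ℝ) (hθs : ∀ i, 0 ≤ θs i) (hθs1 : ∑ i, θs i = 1)
    (hmin : ∀ θ' : Fin n → ℝ, (∀ i, 0 ≤ θ' i) → (∑ i, θ' i = 1) →
      dualG g α η θs ≤ dualG g α η θ') :
    Finset.univ.sup' (Finset.univ_nonempty_iff.mpr (Fin.pos_iff_nonempty.mp hn))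
        (fun i => ⟪g i, (-η) • ∑ j, θs j • g j⟫ - α i) =
      -(η * ‖∑ j, θs j • g j‖ ^ 2 + ∑ j, θs j * α j) :=
  stmt_9_general hn g α η θs hθs hθs1 hmin
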